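/- arXiv:2207.00194 — 5 statements merged into one kernel-verified Lean document; each statement's English description precedes it below -/
import Mathlib

section
/- There is an absolute constant C > 0 such that the following holds. Let θ₀, θ₁ ∈ ℝ and v ∈ ℝ with |v| ≤ 1/10 satisfy cot(θ₁) = cot(θ₀) - v (with both cotangents defined). Then |e^{2iθ₁} - e^{2iθ₀}·e^{2iv·sin²(θ₀)}| ≤ C·v². -/
/-!
Writing `c = cot θ₀`, one has `e^{2iθ} = (cot θ + i)/(cot θ - i)`, so the recursion
`cot θ₁ = c - v` gives the exact factorisation
`e^{2iθ₁} = e^{2iθ₀} · (1 - a)/(1 - b)` with `a = v/(c + i) = v sin θ₀ e^{-iθ₀}` and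
`b = v/(c - i) = v sin θ₀ e^{iθ₀}`. Both have modulus at most `|v|`, and `b - a = 2iv sin² θ₀`,
so the claim reduces to `(1 - a)/(1 - b) = e^{b - a} + O(|a|² + |b|²)` for small `a`, `b`.
-/

open Complex

theorem sub_div_sub_eq_div_mul {K : Type*} [Field K] {p q : K} (hp : p ≠ 0) (hq : q ≠ 0)
    (v : K) : (p - v) / (q - v) = p / q * ((1 - v / p) / (1 - v / q)) := by
  rw [one_sub_div hp, one_sub_div hq, div_div_div_eq, div_mul_div_comm,
    show p * ((p - v) * q) = (p - v) * (p * q) by ring,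
    show q * (p * (q - v)) = (q - v) * (p * q) by ring, mul_div_mul_right _ _ (mul_ne_zero hp hq)]

theorem one_half_le_norm_one_sub {R : Type*} [SeminormedRing R] [NormOneClass R] {b : R}
    (hb : ‖b‖ ≤ 1 / 2) : 1 / 2 ≤ ‖1 - b‖ := by
  have := norm_sub_norm_le (1 : R) b
  rw [norm_one] at this
  linarith

namespace Complex

theorem norm_inv_one_sub_sub_exp_le {b : ℂ} (hb : ‖b‖ ≤ 1 / 2) :
    ‖(1 - b)⁻¹ - exp b‖ ≤ 3 * ‖b‖ ^ 2 := by
  have h1b := one_half_le_norm_one_sub hb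
  have hne : 1 - b ≠ 0 := norm_pos_iff.1 (by linarith)
  have hsplit : (1 - b)⁻¹ - exp b = b ^ 2 / (1 - b) - (exp b - 1 - b) := by
    field_simp
    ring
  calc ‖(1 - b)⁻¹ - exp b‖ ≤ ‖b ^ 2 / (1 - b)‖ + ‖exp b - 1 - b‖ := by
        rw [hsplit]; exact norm_sub_le _ _
    _ ≤ ‖b‖ ^ 2 / (1 / 2) + ‖b‖ ^ 2 := by
        rw [norm_div, norm_pow]
        gcongr
        exact norm_exp_sub_one_sub_id_le (by linarith)
    _ = 3 * ‖b‖ ^ 2 := by ring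

theorem norm_one_sub_div_one_sub_sub_exp_le {a b : ℂ} {r : ℝ} (ha : ‖a‖ ≤ r) (hb : ‖b‖ ≤ r)
    (hr : r ≤ 1 / 2) : ‖(1 - a) / (1 - b) - exp (b - a)‖ ≤ 8 * r ^ 2 := by
  have hsplit : (1 - a) / (1 - b) - exp (b - a)
      = -(exp (-a) - 1 - -a) * (1 - b)⁻¹ + exp (-a) * ((1 - b)⁻¹ - exp b) := by
    rw [sub_eq_neg_add b, exp_add]
    ring
  have h_inv : ‖(1 - b)⁻¹‖ ≤ 2 := by
    rw [norm_inv]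
    exact inv_le_of_inv_le₀ (by norm_num) (by simpa using one_half_le_norm_one_sub (hb.trans hr))
  have h_exp : ‖exp (-a)‖ ≤ 2 := by
    have := norm_exp_sub_one_le (x := -a) (by rw [norm_neg]; linarith)
    have := norm_le_norm_add_norm_sub' (exp (-a)) 1
    rw [norm_one, norm_neg] at *
    linarith
  have h_quad : ‖exp (-a) - 1 - -a‖ ≤ r ^ 2 := by
    refine (norm_exp_sub_one_sub_id_le (by rw [norm_neg]; linarith)).trans ?_
    rw [norm_neg]
    exact pow_le_pow_left₀ (norm_nonneg a) ha 2
  have h_inv_exp : ‖(1 - b)⁻¹ - exp b‖ ≤ 3 * r ^ 2 :=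
    (norm_inv_one_sub_sub_exp_le (hb.trans hr)).trans (by gcongr)
  calc ‖(1 - a) / (1 - b) - exp (b - a)‖
      ≤ ‖exp (-a) - 1 - -a‖ * ‖(1 - b)⁻¹‖ + ‖exp (-a)‖ * ‖(1 - b)⁻¹ - exp b‖ := by
        rw [hsplit, ← norm_neg (exp (-a) - 1 - -a), ← norm_mul, ← norm_mul]
        exact norm_add_le _ _
    _ ≤ r ^ 2 * 2 + 2 * (3 * r ^ 2) := by gcongr
    _ = 8 * r ^ 2 := by ring

variable {z : ℂ}

theorem cot_add_I (hz : sin z ≠ 0) : cot z + I = exp (z * I) / sin z := by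
  rw [cot_eq_cos_div_sin, exp_mul_I]
  field_simp

theorem cot_sub_I (hz : sin z ≠ 0) : cot z - I = exp (-z * I) / sin z := by
  rw [cot_eq_cos_div_sin, exp_mul_I, cos_neg, sin_neg]
  field_simp
  ring

theorem exp_two_mul_I_mul_eq_div (hz : sin z ≠ 0) :
    exp (2 * I * z) = (cot z + I) / (cot z - I) := by
  rw [cot_add_I hz, cot_sub_I hz, div_div_eq_mul_div, div_mul_cancel₀ _ hz, ← exp_sub]
  ring_nf

theorem exp_two_mul_I_mul_of_cot_eq_sub {w v : ℂ} (hz : sin z ≠ 0) (hw : sin w ≠ 0)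
    (h : cot w = cot z - v) :
    exp (2 * I * w) = exp (2 * I * z)
      * ((1 - v * sin z * exp (-z * I)) / (1 - v * sin z * exp (z * I))) := by
  have hp : cot z + I ≠ 0 := by rw [cot_add_I hz]; exact div_ne_zero (exp_ne_zero _) hz
  have hq : cot z - I ≠ 0 := by rw [cot_sub_I hz]; exact div_ne_zero (exp_ne_zero _) hz
  have ha : v / (cot z + I) = v * sin z * exp (-z * I) := by
    rw [cot_add_I hz, div_div_eq_mul_div, div_eq_mul_inv, ← exp_neg, neg_mul]
  have hb : v / (cot z - I) = v * sin z * exp (z * I) := by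
    rw [cot_sub_I hz, div_div_eq_mul_div, div_eq_mul_inv, ← exp_neg, neg_mul, neg_neg]
  rw [exp_two_mul_I_mul_eq_div hw, exp_two_mul_I_mul_eq_div hz, h, sub_add_eq_add_sub,
    sub_right_comm, sub_div_sub_eq_div_mul hp hq, ha, hb]

theorem mul_sin_mul_exp_sub (v : ℂ) :
    v * sin z * exp (z * I) - v * sin z * exp (-z * I) = 2 * I * (v * sin z ^ 2) := by
  linear_combination (-(v * sin z) * I) * two_sin z
    + v * sin z * (exp (z * I) - exp (-z * I)) * I_sq

theorem norm_ofReal_mul_sin_mul_exp_le (v θ φ : ℝ) :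
    ‖(v : ℂ) * sin θ * exp (φ * I)‖ ≤ |v| := by
  rw [norm_mul, norm_mul, norm_exp_ofReal_mul_I, mul_one, ← ofReal_sin, norm_real, norm_real]
  exact mul_le_of_le_one_right (abs_nonneg v) (Real.abs_sin_le_one θ)

end Complex

/-- The key identity behind the second-order Prüfer angle expansion:
if `cot θ₁ = cot θ₀ - v` with `|v| ≤ 1/10`, then
`e^{2iθ₁} = e^{2iθ₀}·e^{2iv·sin²θ₀} + O(v²)` with an absolute constant. -/
theorem exp_cot_perturbation : ∃ C : ℝ, 0 < C ∧
    ∀ θ₀ θ₁ v : ℝ, |v| ≤ 1 / 10 →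
      Real.sin θ₀ ≠ 0 → Real.sin θ₁ ≠ 0 →
      Real.cot θ₁ = Real.cot θ₀ - v →
      ‖Complex.exp (2 * Complex.I * (θ₁ : ℂ))
          - Complex.exp (2 * Complex.I * (θ₀ : ℂ))
            * Complex.exp (2 * Complex.I * ((v * (Real.sin θ₀) ^ 2 : ℝ) : ℂ))‖
        ≤ C * v ^ 2 := by
  refine ⟨8, by norm_num, fun θ₀ θ₁ v hv hs₀ hs₁ hcot => ?_⟩
  have hs₀' : sin (θ₀ : ℂ) ≠ 0 := by exact_mod_cast hs₀
  have hs₁' : sin (θ₁ : ℂ) ≠ 0 := by exact_mod_cast hs₁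
  have hcot' : cot (θ₁ : ℂ) = cot (θ₀ : ℂ) - v := by exact_mod_cast hcot
  have ha : ‖(v : ℂ) * sin θ₀ * exp (-θ₀ * I)‖ ≤ |v| := by
    simpa using norm_ofReal_mul_sin_mul_exp_le v θ₀ (-θ₀)
  have hb : ‖(v : ℂ) * sin θ₀ * exp (θ₀ * I)‖ ≤ |v| := norm_ofReal_mul_sin_mul_exp_le v θ₀ θ₀
  have h_unit : ‖exp (2 * I * θ₀)‖ = 1 := by
    rw [mul_comm 2, mul_assoc, ← ofReal_ofNat, ← ofReal_mul, norm_exp_I_mul_ofReal]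
  rw [exp_two_mul_I_mul_of_cot_eq_sub hs₀' hs₁' hcot', ← mul_sub, norm_mul, h_unit, one_mul,
    ofReal_mul, ofReal_pow, ofReal_sin, ← mul_sin_mul_exp_sub, ← sq_abs v]
  exact norm_one_sub_div_one_sub_sub_exp_le ha hb (by linarith)
end

section
/- Let E ∈ (-2,2) with E = 2cos(πk), k ∈ (0,1), let V : ℕ → ℝ, and let θ(n) be the Prüfer angle of a solution of u(n+1) + u(n-1) + V(n)u(n) = E·u(n), so that cot(πθ(n+1) - πk) = cot(πθ(n)) - V(n)/sin(πk). If |V(n)/sin(πk)| < 1/2, then |θ(n+1) - θ(n) - k| ≤ |V(n)/sin(πk)|. -/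
/-!
Write `α = πθ(n)` and `δ = V(n)/sin(πk)`. Without dividing by `sin α`, the Prüfer recursion
`cot(πθ(n+1) - πk) = cot α - δ` says that `R(n+1)·(cos, sin)(πθ(n+1) - πk)` equals
`R(n)·(cos α - δ sin α, sin α)`. Hence the increment `x = θ(n+1) - θ(n) - k` satisfies
`tan(πx) = δ sin² α / (1 - δ sin α cos α)`, whose modulus is at most `2|δ|` when
`|δ| < 1/2`. The branch condition `|x| < 1/2` gives `π|x| ≤ |tan(πx)|`, hence
`|x| ≤ 2|δ|/π ≤ |δ|`.
-/

noncomputable section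

/-- `u` solves the eigen-equation `u(n+1) + u(n-1) + V(n)u(n) = E·u(n)` for all `n ≥ 1`. -/
def EigenEq (V : ℕ → ℝ) (E : ℝ) (u : ℕ → ℝ) : Prop :=
  ∀ n : ℕ, 1 ≤ n → u (n + 1) + u (n - 1) + V n * u n = E * u n

/-- `(R, θ)` are modified Prüfer variables (radius and angle) of the solution `u`,
with quasimomentum `k`: `u(n-1) = R(n)·sin(πθ(n) - πk)` and
`(u(n) - cos(πk)·u(n-1))/sin(πk) = R(n)·cos(πθ(n) - πk)`, with `R(n) > 0`. -/
def PruferRel (k : ℝ) (u R θ : ℕ → ℝ) : Prop :=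
  ∀ n : ℕ, 1 ≤ n → 0 < R n ∧
    u (n - 1) = R n * Real.sin (Real.pi * θ n - Real.pi * k) ∧
    (u n - Real.cos (Real.pi * k) * u (n - 1)) / Real.sin (Real.pi * k)
      = R n * Real.cos (Real.pi * θ n - Real.pi * k)

/-- The Prüfer angle is chosen along the continuous branch:
`θ(n+1) - θ(n) - k ∈ (-1/2, 1/2)`. -/
def BranchCond (k : ℝ) (θ : ℕ → ℝ) : Prop :=
  ∀ n : ℕ, 1 ≤ n → |θ (n + 1) - θ n - k| < 1 / 2

open Real

theorem Real.abs_le_abs_tan {y : ℝ} (hy : |y| < π / 2) : |y| ≤ |tan y| := by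
  rcases abs_cases y with ⟨h, hy0⟩ | ⟨h, hy0⟩
  · rw [h] at hy ⊢
    exact (le_tan hy0 hy).trans (le_abs_self _)
  · rw [h] at hy ⊢
    calc -y ≤ tan (-y) := le_tan (by linarith) hy
      _ = -tan y := tan_neg y
      _ ≤ |tan y| := neg_le_abs _

theorem tan_sub_eq_of_rotation {r r' α β δ : ℝ} (hr : r ≠ 0) (hr' : r' ≠ 0)
    (hsin : r' * sin β = r * sin α) (hcos : r' * cos β = r * (cos α - δ * sin α)) :
    tan (β - α) = δ * sin α ^ 2 / (1 - δ * sin α * cos α) := by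
  have hsub_sin : r' * sin (β - α) = r * (δ * sin α ^ 2) := by
    rw [sin_sub]
    linear_combination cos α * hsin - sin α * hcos
  have hsub_cos : r' * cos (β - α) = r * (1 - δ * sin α * cos α) := by
    rw [cos_sub]
    linear_combination cos α * hcos + sin α * hsin + r * sin_sq_add_cos_sq α
  rw [tan_eq_sin_div_cos, ← mul_div_mul_left _ _ hr', hsub_sin, hsub_cos,
    mul_div_mul_left _ _ hr]

theorem abs_div_one_sub_le {δ a b : ℝ} (hδ : |δ| < 1 / 2) (ha : |a| ≤ 1) (hb : |b| ≤ 1) :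
    |δ * a / (1 - δ * b)| ≤ 2 * |δ| := by
  have hδb : |δ * b| ≤ |δ| := by
    rw [abs_mul]; exact mul_le_of_le_one_right (abs_nonneg δ) hb
  have hden : 1 / 2 < 1 - δ * b := by linarith [le_abs_self (δ * b)]
  rw [abs_div, abs_of_pos (a := 1 - δ * b) (by linarith), div_le_iff₀ (by linarith), abs_mul]
  calc |δ| * |a| ≤ |δ| := mul_le_of_le_one_right (abs_nonneg δ) ha
    _ ≤ 2 * |δ| * (1 - δ * b) := by nlinarith [abs_nonneg δ]

namespace PruferRel

variable {k : ℝ} {u R θ : ℕ → ℝ}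

theorem eq_mul_sin (hpr : PruferRel k u R θ) (hs : sin (π * k) ≠ 0) {n : ℕ} (hn : 1 ≤ n) :
    u n = R n * sin (π * θ n) := by
  obtain ⟨-, hprev, hcur⟩ := hpr n hn
  rw [div_eq_iff hs] at hcur
  rw [show π * θ n = (π * θ n - π * k) + π * k by ring, sin_add]
  linear_combination hcur + cos (π * k) * hprev

theorem step {V : ℕ → ℝ} (hpr : PruferRel k u R θ) (heq : EigenEq V (2 * cos (π * k)) u)
    (hs : sin (π * k) ≠ 0) {n : ℕ} (hn : 1 ≤ n) :
    R (n + 1) * sin (π * θ (n + 1) - π * k) = R n * sin (π * θ n) ∧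
      R (n + 1) * cos (π * θ (n + 1) - π * k)
        = R n * (cos (π * θ n) - V n / sin (π * k) * sin (π * θ n)) := by
  obtain ⟨-, hprev, hcur⟩ := hpr (n + 1) (by omega)
  rw [Nat.add_sub_cancel] at hprev hcur
  have hun := hpr.eq_mul_sin hs hn
  refine ⟨by rw [← hprev, hun], ?_⟩
  have hun_prev :
      u (n - 1) = R n * (sin (π * θ n) * cos (π * k) - cos (π * θ n) * sin (π * k)) := by
    rw [(hpr n hn).2.1, sin_sub]
  rw [← hcur, div_eq_iff hs]
  linear_combination heq n hn + (cos (π * k) - V n) * hun - hun_prev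
    + R n * sin (π * θ n) * div_mul_cancel₀ (V n) hs

end PruferRel

theorem prufer_angle_increment_bound_general (E k : ℝ)
    (hk : k ∈ Set.Ioo (0 : ℝ) 1) (hEk : E = 2 * Real.cos (Real.pi * k))
    (V u R θ : ℕ → ℝ)
    (heq : EigenEq V E u) (hpr : PruferRel k u R θ) (hbr : BranchCond k θ)
    (n : ℕ) (hn : 1 ≤ n) (hV : |V n / Real.sin (Real.pi * k)| < 1 / 2) :
    |θ (n + 1) - θ n - k| ≤ |V n / Real.sin (Real.pi * k)| := by
  subst hEk
  have hs : sin (π * k) ≠ 0 :=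
    (sin_pos_of_pos_of_lt_pi (by nlinarith [pi_pos, hk.1]) (by nlinarith [pi_pos, hk.2])).ne'
  obtain ⟨hsin, hcos⟩ := hpr.step heq hs hn
  have htan := tan_sub_eq_of_rotation (hpr n hn).1.ne' (hpr (n + 1) (by omega)).1.ne' hsin hcos
  rw [show π * θ (n + 1) - π * k - π * θ n = π * (θ (n + 1) - θ n - k) by ring] at htan
  set x := θ (n + 1) - θ n - k
  have hπx : |π * x| = π * |x| := by rw [abs_mul, abs_of_pos pi_pos]
  have hsmall : |π * x| < π / 2 := by rw [hπx]; nlinarith [hbr n hn, pi_pos]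
  have hbound : π * |x| ≤ 2 * |V n / sin (π * k)| :=
    calc π * |x| ≤ |tan (π * x)| := hπx ▸ abs_le_abs_tan hsmall
      _ ≤ 2 * |V n / sin (π * k)| := by
          rw [htan, mul_assoc]
          refine abs_div_one_sub_le hV (by rw [abs_pow, sq_abs]; exact sin_sq_le_one _) ?_
          rw [abs_mul]
          exact mul_le_one₀ (abs_sin_le_one _) (abs_nonneg _) (abs_cos_le_one _)
  nlinarith [pi_gt_three, abs_nonneg x]

/-- First-order estimate for the Prüfer angle increment (Simon, Proposition 2.4):
if `|V(n)/sin(πk)| < 1/2` then `|θ(n+1) - θ(n) - k| ≤ |V(n)/sin(πk)|`. -/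
theorem prufer_angle_increment_bound (E k : ℝ) (hE : E ∈ Set.Ioo (-2 : ℝ) 2)
    (hk : k ∈ Set.Ioo (0 : ℝ) 1) (hEk : E = 2 * Real.cos (Real.pi * k))
    (V u R θ : ℕ → ℝ) (hu : u ≠ 0)
    (heq : EigenEq V E u) (hpr : PruferRel k u R θ) (hbr : BranchCond k θ)
    (n : ℕ) (hn : 1 ≤ n) (hV : |V n / Real.sin (Real.pi * k)| < 1 / 2) :
    |θ (n + 1) - θ n - k| ≤ |V n / Real.sin (Real.pi * k)| :=
  prufer_angle_increment_bound_general E k hk hEk V u R θ heq hpr hbr n hn hV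
end
end

section
/- There is an absolute constant C > 0 such that the following holds. Let E ∈ (-2,2) with E = 2cos(πk), k ∈ (0,1), let V : ℕ → ℝ, and let θ(n) be the Prüfer angle of a solution of u(n+1) + u(n-1) + V(n)u(n) = E·u(n), satisfying cot(πθ(n+1) - πk) = cot(πθ(n)) - V(n)/sin(πk). If |V(n)/sin(πk)| < 1/10, then |θ(n+1) - θ(n) - k - sin²(πθ(n))·V(n)/(π·sin(πk))| ≤ C·V(n)²/sin²(πk). -/
noncomputable section

/-!
Eliminating the radii `R(n)`, `R(n+1)` between the Prüfer relations at `n`, `n + 1` and the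
eigen-equation gives the exact recursion `sin(πk) sin(πδ) = V(n) sin(πθ(n)) sin(πθ(n) + πδ)` for
the increment `δ = θ(n+1) - θ(n) - k`. With `v = V(n)/sin(πk)` this bounds `|sin(πδ)| ≤ |v|`, and on
the branch `|δ| < 1/2` Jordan's inequality gives `|πδ| ≤ (π/2)|v|`. Then
`πδ - v sin²(πθ(n)) = (πδ - sin(πδ)) + v sin(πθ(n)) (sin(πθ(n) + πδ) - sin(πθ(n)))`
is `O(v²)`, since `|t - sin t| ≤ |t|³/6` and `sin` is 1-Lipschitz; the constant `C = 1` works.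
-/

open Real

theorem sin_add_add_mul_sin_sub_sin_add_mul_sin_add (a b x : ℝ) :
    sin (a + b + x) * sin a - sin (a + x) * sin (a + b) = -(sin b * sin x) := by
  simp only [sin_add, cos_add]
  linear_combination (-(sin b * sin x)) * sin_sq_add_cos_sq a

theorem PruferRel.eq_mul_sin_s6 {k : ℝ} {u R θ : ℕ → ℝ} (h : PruferRel k u R θ)
    (hs : sin (π * k) ≠ 0) {n : ℕ} (hn : 1 ≤ n) : u n = R n * sin (π * θ n) := by
  obtain ⟨-, hprev, hcur⟩ := h n hn
  rw [div_eq_iff hs, hprev] at hcur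
  have : π * θ n = (π * θ n - π * k) + π * k := by ring
  rw [this, sin_add]
  linear_combination hcur

theorem PruferRel.sin_mul_sin_increment {E k : ℝ} {V u R θ : ℕ → ℝ}
    (hPrufer : PruferRel k u R θ) (hEigen : EigenEq V E u) (hE : E = 2 * cos (π * k))
    (hs : sin (π * k) ≠ 0) {n : ℕ} (hn : 1 ≤ n) :
    sin (π * k) * sin (π * (θ (n + 1) - θ n - k))
      = V n * sin (π * θ n) * sin (π * θ n + π * (θ (n + 1) - θ n - k)) := by
  obtain ⟨hR, hprev, -⟩ := hPrufer n hn
  obtain ⟨hR', hcur, -⟩ := hPrufer (n + 1) (by omega)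
  rw [Nat.add_sub_cancel] at hcur
  have hu := hPrufer.eq_mul_sin_s6 hs hn
  have hu' := hPrufer.eq_mul_sin_s6 hs (n := n + 1) (by omega)
  have hsame : R n * sin (π * θ n) = R (n + 1) * sin (π * θ (n + 1) - π * k) := hu.symm.trans hcur
  -- `hnext` (from the eigen-equation) and `hsame` both express `R(n+1)/R(n)`; equate them
  have hnext : R (n + 1) * sin (π * θ (n + 1))
      = R n * (sin (π * θ n + π * k) - V n * sin (π * θ n)) := by
    have h := hEigen n hn
    rw [hE, hu, hu', hprev, sin_sub] at h
    rw [sin_add]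
    linear_combination h
  have hcross : sin (π * θ (n + 1)) * sin (π * θ n)
      = sin (π * θ (n + 1) - π * k) * (sin (π * θ n + π * k) - V n * sin (π * θ n)) := by
    apply mul_left_cancel₀ (mul_pos hR' hR).ne'
    linear_combination R n * sin (π * θ n) * hnext
      + R n * (sin (π * θ n + π * k) - V n * sin (π * θ n)) * hsame
  have hβ : π * θ (n + 1) = π * θ n + π * k + π * (θ (n + 1) - θ n - k) := by ring
  have hβk : π * θ (n + 1) - π * k = π * θ n + π * (θ (n + 1) - θ n - k) := by ring
  rw [hβk, hβ] at hcross
  linear_combination -hcross + sin_add_add_mul_sin_sub_sin_add_mul_sin_add (π * θ n) (π * k)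
    (π * (θ (n + 1) - θ n - k))

theorem abs_sub_mul_sin_sq_le_of_sin_eq {v a x : ℝ} (hv : |v| < 1 / 10) (hx : |x| ≤ π / 2)
    (h : sin x = v * sin a * sin (a + x)) : |x - v * sin a ^ 2| ≤ π * v ^ 2 := by
  have hsin : |sin x| ≤ |v| := by
    rw [h, abs_mul, abs_mul]
    have := mul_le_one₀ (abs_sin_le_one a) (abs_nonneg _) (abs_sin_le_one (a + x))
    nlinarith [abs_nonneg v]
  have hxv : |x| ≤ π / 2 * |v| := by
    have := mul_abs_le_abs_sin hx
    rw [div_mul_eq_mul_div, div_le_iff₀ pi_pos] at this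
    nlinarith [mul_le_mul_of_nonneg_right hsin pi_pos.le]
  have hlin : |v * sin a * (sin (a + x) - sin a)| ≤ |v| * |x| := by
    rw [abs_mul, abs_mul]
    have := mul_le_mul (abs_sin_le_one a) (abs_sin_sub_sin_le (a + x) a) (abs_nonneg _) zero_le_one
    rw [add_sub_cancel_left] at this
    nlinarith [abs_nonneg v]
  have hcube : |x| ^ 3 / 6 ≤ v ^ 2 / 5 := by
    have h2v : |x| ≤ 2 * |v| := hxv.trans (by nlinarith [pi_le_four, abs_nonneg v])
    have := pow_le_pow_left₀ (abs_nonneg x) h2v 3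
    nlinarith [sq_abs v, abs_nonneg v]
  calc |x - v * sin a ^ 2| = |(x - sin x) + v * sin a * (sin (a + x) - sin a)| := by
        rw [h]; ring_nf
    _ ≤ |x - sin x| + |v * sin a * (sin (a + x) - sin a)| := abs_add_le _ _
    _ ≤ |x| ^ 3 / 6 + |v| * |x| := add_le_add (abs_sub_sin_le x) hlin
    _ ≤ π * v ^ 2 := by
        nlinarith [mul_le_mul_of_nonneg_left hxv (abs_nonneg v), sq_abs v, pi_gt_three]

/-- Second-order expansion of the Prüfer angle increment: if `|V(n)/sin(πk)| < 1/10`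
then `θ(n+1) = θ(n) + k + sin²(πθ(n))·V(n)/(π·sin(πk)) + O(V(n)²/sin²(πk))`
with an absolute constant in the `O`. -/
theorem prufer_angle_second_order : ∃ C : ℝ, 0 < C ∧
    ∀ (E k : ℝ), E ∈ Set.Ioo (-2 : ℝ) 2 → k ∈ Set.Ioo (0 : ℝ) 1 →
      E = 2 * Real.cos (Real.pi * k) →
    ∀ (V u R θ : ℕ → ℝ), u ≠ 0 → EigenEq V E u → PruferRel k u R θ → BranchCond k θ →
    ∀ n : ℕ, 1 ≤ n → |V n / Real.sin (Real.pi * k)| < 1 / 10 →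
      |θ (n + 1) - θ n - k
          - (Real.sin (Real.pi * θ n)) ^ 2 * V n / (Real.pi * Real.sin (Real.pi * k))|
        ≤ C * (V n) ^ 2 / (Real.sin (Real.pi * k)) ^ 2 := by
  refine ⟨1, one_pos, ?_⟩
  intro E k _ ⟨hk0, hk1⟩ hE V u R θ _ hEigen hPrufer hBranch n hn hV
  have hs : 0 < sin (π * k) :=
    sin_pos_of_pos_of_lt_pi (mul_pos pi_pos hk0) (by nlinarith [pi_pos])
  have hx : |π * (θ (n + 1) - θ n - k)| ≤ π / 2 := by
    rw [abs_mul, abs_of_pos pi_pos]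
    nlinarith [hBranch n hn, pi_pos]
  have hrec := hPrufer.sin_mul_sin_increment hEigen hE hs.ne' hn
  have key := abs_sub_mul_sin_sq_le_of_sin_eq (a := π * θ n) hV hx <| by
    rw [div_mul_eq_mul_div, div_mul_eq_mul_div, eq_div_iff hs.ne']
    linear_combination hrec
  have hscale : θ (n + 1) - θ n - k - sin (π * θ n) ^ 2 * V n / (π * sin (π * k))
      = (π * (θ (n + 1) - θ n - k) - V n / sin (π * k) * sin (π * θ n) ^ 2) / π := by
    field_simp
  rw [hscale, abs_div, abs_of_pos pi_pos, div_le_iff₀ pi_pos]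
  exact key.trans_eq (by ring)
end
end

section
/- Let k ∈ (0,1), L ∈ ℕ, N ∈ ℕ, b ∈ ℕ, and K > 10⁸·π·N. Then there exists C > 0 (depending on k, N, K) such that the following holds for all n₀ ∈ ℕ with n₀ - b ≥ C. Suppose F : ℕ → (0,∞) and φ : ℕ → ℝ satisfy, for every m ∈ ℕ: ln F(n₀+(m+1)N)² = ln F(n₀+mN)² - (K/(2(n₀+mN-b)·sin(πk)))·(1 - cos(2πφ(n₀+mN)) + δ(m)) and φ(n₀+(m+1)N) = φ(n₀+mN) + L + (K/((n₀+mN-b)·π·sin(πk)))·(100 + ε(m)), where |δ(m)| ≤ sin(πk)/10⁴ and |ε(m)| < 1 for all m. Then for every m ∈ ℕ, F(n₀+mN) ≤ 1.5·F(n₀)·((n₀-b+mN)/(n₀-b))^{-100}. -/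
/-!
Modulo integers the phase advances by steps `t ≈ 100 c` with `c = K / ((n₀ + mN - b) π sin πk)`,
which are small once `n₀ - b` is large. A phase moving in small steps cannot linger near the zeros
of `1 - cos (2πx)`: the weighted sum `∑ t (1 - cos (2πq))` is at least half of `∑ t` up to a bounded
error. So `log F²` decreases in total by a multiple of `∑ c ≳ K ∑ 1 / (n₀ + jN - b)`, and since
`K ≫ N` this dominates `200 log ((n₀ - b + mN) / (n₀ - b))`.
-/

open Real Finset

lemma mul_cos_sub_le_sin_add_sub_sin (a : ℝ) {h : ℝ} (hh : 0 ≤ h) :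
    h * cos a - h ^ 2 / 2 - h ^ 3 / 6 ≤ sin (a + h) - sin a := by
  rcases hh.eq_or_lt with rfl | hpos
  · simp
  have hsin : h - h ^ 3 / 6 < sin h := sin_gt_sub_cube hpos
  have hcos : 1 - h ^ 2 / 2 ≤ cos h := one_sub_sq_div_two_le_cos
  rw [sin_add]
  nlinarith [sin_le hh, cos_le_one h, neg_one_le_sin a, sin_le_one a, neg_one_le_cos a,
    cos_le_one a]

/-- `x - sin (2πx) / (2π)` is an antiderivative of `1 - cos (2πx)`, so the left sum is a Riemann
sum for `∫ (1 - cos (2πx)) dx` over `[q 0, q m]`, an interval of length `∑ t j`. -/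
lemma half_sum_sub_inv_pi_le_sum_mul_one_sub_cos {q t : ℕ → ℝ}
    (hq : ∀ j, q (j + 1) = q j + t j) (ht0 : ∀ j, 0 ≤ t j) (ht : ∀ j, 4 * π * t j ≤ 1) (m : ℕ) :
    (∑ j ∈ range m, t j) / 2 - 1 / π ≤ ∑ j ∈ range m, t j * (1 - cos (2 * π * q j)) := by
  set G : ℝ → ℝ := fun x => x - sin (2 * π * x) / (2 * π)
  have hstep : ∀ j, G (q (j + 1)) - G (q j) ≤ t j * (1 - cos (2 * π * q j)) + t j / 2 := by
    intro j
    have htaylor := mul_cos_sub_le_sin_add_sub_sin (2 * π * q j) (by have := ht0 j; positivity :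
      0 ≤ 2 * π * t j)
    calc G (q (j + 1)) - G (q j)
        = t j - (sin (2 * π * q j + 2 * π * t j) - sin (2 * π * q j)) / (2 * π) := by
          simp only [G, hq j, mul_add]; ring
      _ ≤ t j - (2 * π * t j * cos (2 * π * q j) - (2 * π * t j) ^ 2 / 2
            - (2 * π * t j) ^ 3 / 6) / (2 * π) := by gcongr
      _ = t j * (1 - cos (2 * π * q j)) + π * t j ^ 2 + 2 / 3 * (π * t j) ^ 2 * t j := by
          field_simp; ring
      _ ≤ t j * (1 - cos (2 * π * q j)) + t j / 2 := by
          nlinarith [ht j, ht0 j, pi_pos, mul_nonneg pi_pos.le (ht0 j)]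
  have hlen : ∑ j ∈ range m, t j = q m - q 0 := by
    rw [← sum_range_sub q m]
    exact sum_congr rfl fun j _ => by rw [hq j]; ring
  have hG : (∑ j ∈ range m, t j) - 1 / π ≤ G (q m) - G (q 0) := by
    have : sin (2 * π * q m) / (2 * π) - sin (2 * π * q 0) / (2 * π) ≤ 1 / π := by
      rw [← sub_div, div_le_iff₀ (by positivity)]
      field_simp
      linarith [sin_le_one (2 * π * q m), neg_one_le_sin (2 * π * q 0)]
    simp only [G, hlen]
    linarith
  have htele : G (q m) - G (q 0) ≤ ∑ j ∈ range m, (t j * (1 - cos (2 * π * q j)) + t j / 2) := by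
    rw [← sum_range_sub (fun j => G (q j)) m]
    exact sum_le_sum fun j _ => hstep j
  rw [sum_add_distrib, ← sum_div] at htele
  linarith

lemma sum_div_three_sub_le_sum_mul_one_sub_cos_add {c t q δ : ℕ → ℝ}
    (hq : ∀ j, q (j + 1) = q j + t j) (ht : ∀ j, t j ∈ Set.Icc (99 * c j) (101 * c j))
    (hc : ∀ j, 404 * π * c j ≤ 1) (hδ : ∀ j, |δ j| ≤ 1 / 10) (m : ℕ) :
    (∑ j ∈ range m, c j) / 3 - 1 / (101 * π) ≤
      ∑ j ∈ range m, c j * (1 - cos (2 * π * q j) + δ j) := by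
  have hc0 : ∀ j, 0 ≤ c j := fun j => by linarith [(ht j).1, (ht j).2]
  have hcos := half_sum_sub_inv_pi_le_sum_mul_one_sub_cos hq
    (fun j => (mul_nonneg (by norm_num) (hc0 j)).trans (ht j).1)
    (fun j => by nlinarith [(ht j).2, hc j, pi_pos]) m
  have hterm : ∀ j ∈ range m,
      t j * (1 - cos (2 * π * q j)) / 101 - c j / 10 ≤ c j * (1 - cos (2 * π * q j) + δ j) := by
    intro j _
    have h1 : 0 ≤ 1 - cos (2 * π * q j) := by linarith [cos_le_one (2 * π * q j)]
    nlinarith [(ht j).2, hc0 j, neg_abs_le (δ j), hδ j, mul_nonneg (hc0 j) h1]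
  have hsum := sum_le_sum hterm
  rw [sum_sub_distrib, ← sum_div, ← sum_div] at hsum
  have ht99 : 99 * ∑ j ∈ range m, c j ≤ ∑ j ∈ range m, t j := by
    rw [mul_sum]; exact sum_le_sum fun j _ => (ht j).1
  have : 1 / (101 * π) = 1 / π / 101 := by field_simp
  linarith [sum_nonneg fun j (_ : j ∈ range m) => hc0 j]

lemma log_div_le_sum_sub_div {w : ℕ → ℝ} (hw : ∀ j, 0 < w j) (m : ℕ) :
    log (w m / w 0) ≤ ∑ j ∈ range m, (w (j + 1) - w j) / w j := by
  rw [log_div (hw m).ne' (hw 0).ne', ← sum_range_sub (fun j => log (w j))]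
  refine sum_le_sum fun j _ => ?_
  rw [← log_div (hw (j + 1)).ne' (hw j).ne', sub_div, div_self (hw j).ne']
  exact log_le_sub_one_of_pos (div_pos (hw (j + 1)) (hw j))

lemma le_mul_mul_rpow_neg_of_log_le {x y a r c : ℝ} (hx : 0 < x) (hy : 0 < y) (hr : 0 < r)
    (hc : 0 < c) (h : log x ≤ log c + log y - a * log r) : x ≤ c * y * r ^ (-a) := by
  rw [← log_le_log_iff hx (by positivity), log_mul (by positivity) (by positivity),
    log_mul hc.ne' hy.ne', log_rpow hr]
  linarith

theorem mul_log_sub_le_sum_div_mul_one_sub_cos_add {K s d N : ℝ} (hs0 : 0 < s) (hs1 : s ≤ 1)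
    (hN : 0 ≤ N) (hK : 1200 * N ≤ K) (hd0 : 0 < d) (hd : 404 * K ≤ d * s) {q δ ε : ℕ → ℝ}
    (hδ : ∀ j, |δ j| ≤ s / 10 ^ 4) (hε : ∀ j, |ε j| < 1)
    (hq : ∀ j : ℕ, q (j + 1) = q j + K / ((d + j * N) * π * s) * (100 + ε j)) (m : ℕ) :
    200 * log ((d + m * N) / d) - 1 / 202 ≤
      ∑ j ∈ range m, K / (2 * (d + j * N) * s) * (1 - cos (2 * π * q j) + δ j) := by
  have hW : ∀ j : ℕ, 0 < d + j * N := fun j => by positivity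
  have hK0 : 0 ≤ K := by linarith
  set c : ℕ → ℝ := fun j => K / ((d + j * N) * π * s)
  have hcos_sum := sum_div_three_sub_le_sum_mul_one_sub_cos_add hq
    (t := fun j => c j * (100 + ε j)) (δ := δ)
    (fun j => by
      have := abs_lt.1 (hε j)
      have hc0 : 0 ≤ c j := by positivity
      constructor <;> nlinarith)
    (fun j => by
      have hWd : d * s ≤ (d + j * N) * s := by have := hW j; nlinarith [mul_nonneg hN hs0.le]
      calc 404 * π * c j = 404 * K / ((d + j * N) * s) := by simp only [c]; field_simp
        _ ≤ 1 := by rw [div_le_one (by have := hW j; positivity)]; linarith)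
    (fun j => (hδ j).trans (by linarith)) m
  have hlog_sum := log_div_le_sum_sub_div (w := fun j => d + j * N) hW m
  simp only [Nat.cast_zero, zero_mul, add_zero] at hlog_sum
  have hterm : ∀ j ∈ range m, 200 * ((d + ((j + 1 : ℕ) : ℝ) * N - (d + j * N)) / (d + j * N))
      ≤ π / 6 * c j := fun j _ => by
    have hstep : d + ((j + 1 : ℕ) : ℝ) * N - (d + j * N) = N := by push_cast; ring
    have hc : π / 6 * c j = K / (6 * s) / (d + j * N) := by simp only [c]; field_simp
    rw [hstep, hc, ← mul_div_assoc]
    gcongr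
    rw [le_div_iff₀ (by positivity)]
    nlinarith
  have hharmonic := sum_le_sum hterm
  rw [← mul_sum, ← mul_sum] at hharmonic
  calc 200 * log ((d + m * N) / d) - 1 / 202
      ≤ π / 2 * ((∑ j ∈ range m, c j) / 3 - 1 / (101 * π)) := by
        have : π / 2 * ((∑ j ∈ range m, c j) / 3 - 1 / (101 * π))
            = π / 6 * ∑ j ∈ range m, c j - 1 / 202 := by field_simp; ring
        linarith
    _ ≤ π / 2 * ∑ j ∈ range m, c j * (1 - cos (2 * π * q j) + δ j) := by gcongr
    _ = _ := by
        rw [mul_sum]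
        refine sum_congr rfl fun j _ => ?_
        simp only [c]
        field_simp

theorem le_mul_rpow_neg_of_log_sq_eq_of_phase_eq {K s d N : ℝ} {L : ℤ} (hs0 : 0 < s)
    (hs1 : s ≤ 1) (hN : 0 ≤ N) (hK : 1200 * N ≤ K) (hd0 : 0 < d) (hd : 404 * K ≤ d * s)
    {f p δ ε : ℕ → ℝ} (hf : ∀ m, 0 < f m) (hδ : ∀ m, |δ m| ≤ s / 10 ^ 4) (hε : ∀ m, |ε m| < 1)
    (hlog : ∀ m : ℕ, log (f (m + 1) ^ 2)
      = log (f m ^ 2) - K / (2 * (d + m * N) * s) * (1 - cos (2 * π * p m) + δ m))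
    (hp : ∀ m : ℕ, p (m + 1) = p m + L + K / ((d + m * N) * π * s) * (100 + ε m)) (m : ℕ) :
    f m ≤ 1.5 * f 0 * ((d + m * N) / d) ^ (-(100 : ℝ)) := by
  set q : ℕ → ℝ := fun j => p j - j * L
  have hq : ∀ j : ℕ, q (j + 1) = q j + K / ((d + j * N) * π * s) * (100 + ε j) := fun j => by
    simp only [q, hp j]; push_cast; ring
  have hcos : ∀ j, cos (2 * π * p j) = cos (2 * π * q j) := fun j => by
    have : 2 * π * q j = 2 * π * p j - ((j * L : ℤ) : ℝ) * (2 * π) := by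
      simp only [q]; push_cast; ring
    rw [this, cos_sub_int_mul_two_pi]
  have hdecrease : ∑ j ∈ range m, K / (2 * (d + j * N) * s) * (1 - cos (2 * π * q j) + δ j)
      = log (f 0 ^ 2) - log (f m ^ 2) := by
    rw [← sum_range_sub' (fun j => log (f j ^ 2))]
    exact sum_congr rfl fun j _ => by rw [hlog j, hcos j]; ring
  have hbound := mul_log_sub_le_sum_div_mul_one_sub_cos_add hs0 hs1 hN hK hd0 hd hδ hε hq m
  have hlog_three_halves : 1 / 3 ≤ log 1.5 := by
    have := one_sub_inv_le_log_of_pos (by norm_num : (0 : ℝ) < 1.5)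
    norm_num at this ⊢; linarith
  apply le_mul_mul_rpow_neg_of_log_le (hf m) (hf 0) (div_pos (by positivity) hd0) (by norm_num)
  rw [hdecrease, log_pow, log_pow] at hbound
  push_cast at hbound
  linarith

theorem key_iteration_lemma_general (k : ℝ) (hk : k ∈ Set.Ioo (0 : ℝ) 1)
    (L N b : ℕ) (K : ℝ) (hK : K > 10 ^ 8 * Real.pi * (N : ℝ)) :
    ∃ C : ℝ, 0 < C ∧ ∀ n₀ : ℕ, (n₀ : ℝ) - (b : ℝ) ≥ C →
      ∀ F φ δ ε : ℕ → ℝ,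
        (∀ n : ℕ, 0 < F n) →
        (∀ m : ℕ, |δ m| ≤ Real.sin (Real.pi * k) / 10 ^ 4) →
        (∀ m : ℕ, |ε m| < 1) →
        (∀ m : ℕ, Real.log ((F (n₀ + (m + 1) * N)) ^ 2)
            = Real.log ((F (n₀ + m * N)) ^ 2)
              - K / (2 * ((n₀ : ℝ) + (m : ℝ) * (N : ℝ) - (b : ℝ)) * Real.sin (Real.pi * k))
                * (1 - Real.cos (2 * Real.pi * φ (n₀ + m * N)) + δ m)) →
        (∀ m : ℕ, φ (n₀ + (m + 1) * N)
            = φ (n₀ + m * N) + (L : ℝ)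
              + K / (((n₀ : ℝ) + (m : ℝ) * (N : ℝ) - (b : ℝ)) * Real.pi * Real.sin (Real.pi * k))
                * (100 + ε m)) →
        ∀ m : ℕ, F (n₀ + m * N)
          ≤ 1.5 * F n₀
            * ((((n₀ : ℝ) - (b : ℝ) + (m : ℝ) * (N : ℝ)) / ((n₀ : ℝ) - (b : ℝ))) ^ (-(100 : ℝ))) := by
  have hs0 : 0 < sin (π * k) := sin_pos_of_pos_of_lt_pi (mul_pos pi_pos hk.1)
    (mul_lt_of_lt_one_right pi_pos hk.2)
  have hK0 : 0 < K := lt_of_le_of_lt (by positivity) hK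
  refine ⟨404 * K / sin (π * k), by positivity, fun n₀ hn₀ F φ δ ε hF hδ hε hlog hφ m => ?_⟩
  have hd0 : 0 < (n₀ : ℝ) - b := lt_of_lt_of_le (by positivity) hn₀
  have hshift : ∀ j : ℕ, (n₀ : ℝ) + j * N - b = (n₀ - b) + j * N := fun j => by ring
  simp only [hshift] at hlog hφ
  simpa using le_mul_rpow_neg_of_log_sq_eq_of_phase_eq (f := fun j => F (n₀ + j * N))
    (L := L) hs0 (sin_le_one _) (Nat.cast_nonneg N) (by nlinarith [pi_gt_three]) hd0
    ((div_le_iff₀ hs0).1 hn₀) (fun j => hF _) hδ hε hlog (by exact_mod_cast hφ) m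

/-- Key iteration lemma (Lemma 3.1): if `ln F²` decreases according to the stated
recursion driven by the phase `φ`, which in turn drifts by `L` plus a positive
logarithmic term per block of length `N`, then `F` decays polynomially of rate `100`
along the arithmetic progression `n₀ + mN`. -/
theorem key_iteration_lemma (k : ℝ) (hk : k ∈ Set.Ioo (0 : ℝ) 1)
    (L N b : ℕ) (hN : 0 < N) (K : ℝ) (hK : K > 10 ^ 8 * Real.pi * (N : ℝ)) :
    ∃ C : ℝ, 0 < C ∧ ∀ n₀ : ℕ, (n₀ : ℝ) - (b : ℝ) ≥ C →
      ∀ F φ δ ε : ℕ → ℝ,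
        (∀ n : ℕ, 0 < F n) →
        (∀ m : ℕ, |δ m| ≤ Real.sin (Real.pi * k) / 10 ^ 4) →
        (∀ m : ℕ, |ε m| < 1) →
        (∀ m : ℕ, Real.log ((F (n₀ + (m + 1) * N)) ^ 2)
            = Real.log ((F (n₀ + m * N)) ^ 2)
              - K / (2 * ((n₀ : ℝ) + (m : ℝ) * (N : ℝ) - (b : ℝ)) * Real.sin (Real.pi * k))
                * (1 - Real.cos (2 * Real.pi * φ (n₀ + m * N)) + δ m)) →
        (∀ m : ℕ, φ (n₀ + (m + 1) * N)
            = φ (n₀ + m * N) + (L : ℝ)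
              + K / (((n₀ : ℝ) + (m : ℝ) * (N : ℝ) - (b : ℝ)) * Real.pi * Real.sin (Real.pi * k))
                * (100 + ε m)) →
        ∀ m : ℕ, F (n₀ + m * N)
          ≤ 1.5 * F n₀
            * ((((n₀ : ℝ) - (b : ℝ) + (m : ℝ) * (N : ℝ)) / ((n₀ : ℝ) - (b : ℝ))) ^ (-(100 : ℝ))) :=
  key_iteration_lemma_general k hk L N b K hK
end

section
/- Let E ∈ (-2,2) with E = 2cos(πk), k ∈ (0,1), let b ∈ ℕ and K > 0, and let V : ℕ → ℝ satisfy |V(n)| ≤ K/(n-b) and |V(n)/sin(πk)| < 1/2 for all n > b. Let θ(n) be the Prüfer angle of a solution of u(n+1) + u(n-1) + V(n)u(n) = E·u(n). Then there exists a constant C (depending only on E and K) such that for all n > n₀ > b, |∑_{l=n₀}^{n} e^{2πi·θ(l)}/(l-b)| ≤ C/(n₀-b). -/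
/-!
With `w(n) = u(n) - e^{-iπk} u(n-1)` the Prüfer relations say `w(n) = sin(πk) R(n) e^{iπ(θ(n)-k)}`,
so `e^{2πiθ(n)} = e^{2πik} w(n) / conj w(n)`, while the eigen-equation becomes
`w(n+1) = e^{iπk} (w(n) - e^{-iπk} V(n) u(n))`. Since `|u(n)| ≤ |w(n)| / sin(πk)`, this perturbs the
phase by `O(|V(n)| / sin(πk)) = O(1/(n-b))`: `e^{2πiθ(n+1)} = e^{2πik} e^{2πiθ(n)} + O(1/(n-b))`.
Multiplying the sum by `e^{2πik} - 1 ≠ 0` and summing by parts leaves boundary terms of size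
`1/(n₀-b)` and the errors `∑ 1/(l-b)² ≤ 2/(n₀-b)`.
-/

noncomputable section

open ComplexConjugate
open Complex (I)
open scoped Real

theorem norm_div_conj_add_sub_div_conj_le {z : ℂ} (t : ℂ) (hz : z ≠ 0)
    (ht : ‖t‖ ≤ ‖z‖ / 2) :
    ‖(z + t) / conj (z + t) - z / conj z‖ ≤ 4 * ‖t‖ / ‖z‖ := by
  have hz' : 0 < ‖z‖ := norm_pos_iff.mpr hz
  have hzt : ‖z‖ / 2 ≤ ‖z + t‖ := by
    have := norm_sub_norm_le z (-t)
    rw [sub_neg_eq_add, norm_neg] at this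
    linarith
  have hzt' : z + t ≠ 0 := norm_pos_iff.mp (by linarith)
  have key : (z + t) / conj (z + t) - z / conj z
      = (t * conj z - z * conj t) / (conj (z + t) * conj z) := by
    rw [div_sub_div _ _ ((map_ne_zero _).mpr hzt') ((map_ne_zero _).mpr hz), map_add]
    ring
  have hnum : ‖t * conj z - z * conj t‖ ≤ 2 * (‖t‖ * ‖z‖) := by
    calc _ ≤ ‖t * conj z‖ + ‖z * conj t‖ := norm_sub_le _ _
      _ = 2 * (‖t‖ * ‖z‖) := by simp only [norm_mul, Complex.norm_conj]; ring
  rw [key, norm_div, norm_mul, Complex.norm_conj, Complex.norm_conj]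
  calc _ ≤ 2 * (‖t‖ * ‖z‖) / (‖z‖ / 2 * ‖z‖) := by gcongr
    _ = 4 * ‖t‖ / ‖z‖ := by field_simp; ring

theorem sub_one_mul_sum_Icc_eq {R : Type*} [CommRing R] (g d : ℕ → R) (c : R) {n₀ n : ℕ}
    (hn : n₀ ≤ n) :
    (c - 1) * ∑ l ∈ Finset.Icc n₀ n, g l * d l
      = g (n + 1) * d n - g n₀ * d n₀ + ∑ l ∈ Finset.Ico n₀ n, g (l + 1) * (d l - d (l + 1))
        - ∑ l ∈ Finset.Icc n₀ n, (g (l + 1) - c * g l) * d l := by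
  induction n, hn using Nat.le_induction with
  | base => simp only [Finset.Icc_self, Finset.sum_singleton, Finset.Ico_self,
      Finset.sum_empty]; ring
  | succ n hn ih =>
    rw [Finset.sum_Icc_succ_top (by omega), Finset.sum_Icc_succ_top (by omega),
      Finset.sum_Ico_succ_top hn]
    linear_combination ih

theorem norm_sub_one_mul_sum_Icc_le (g : ℕ → ℂ) (c : ℂ) (f : ℕ → ℝ) {n₀ n : ℕ} (hn : n₀ ≤ n)
    (hg : ∀ l, ‖g l‖ ≤ 1) (hf : AntitoneOn f (Set.Icc n₀ n)) (hfn : 0 ≤ f n) :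
    ‖(c - 1) * ∑ l ∈ Finset.Icc n₀ n, g l * f l‖
      ≤ 2 * f n₀ + ∑ l ∈ Finset.Icc n₀ n, ‖g (l + 1) - c * g l‖ * f l := by
  have hf_nonneg : ∀ l ∈ Finset.Icc n₀ n, 0 ≤ f l := fun l hl =>
    hfn.trans (hf (Finset.coe_Icc n₀ n ▸ hl) ⟨hn, le_rfl⟩ (Finset.mem_Icc.mp hl).2)
  have hf_step : ∀ l ∈ Finset.Ico n₀ n, f (l + 1) ≤ f l := fun l hl => by
    obtain ⟨h₁, h₂⟩ := Finset.mem_Ico.mp hl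
    exact hf ⟨h₁, h₂.le⟩ ⟨by omega, h₂⟩ (Nat.le_succ l)
  have hnorm : ∀ m (x : ℝ), 0 ≤ x → ‖g m * (x : ℂ)‖ ≤ x := fun m x hx => by
    rw [norm_mul, Complex.norm_real, Real.norm_of_nonneg hx]
    exact mul_le_of_le_one_left hx (hg m)
  have hmid : ‖∑ l ∈ Finset.Ico n₀ n, g (l + 1) * ((f l : ℂ) - f (l + 1))‖ ≤ f n₀ - f n := by
    calc _ ≤ ∑ l ∈ Finset.Ico n₀ n, (f l - f (l + 1)) := by
          refine norm_sum_le_of_le _ fun l hl => ?_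
          rw [← Complex.ofReal_sub]
          exact hnorm _ _ (sub_nonneg.mpr (hf_step l hl))
      _ = f n₀ - f n := by
          simpa only [neg_sub_neg] using Finset.sum_Ico_sub (f := fun l => -f l) hn
  have hlast : ‖∑ l ∈ Finset.Icc n₀ n, (g (l + 1) - c * g l) * (f l : ℂ)‖
      ≤ ∑ l ∈ Finset.Icc n₀ n, ‖g (l + 1) - c * g l‖ * f l := by
    refine norm_sum_le_of_le _ fun l hl => ?_
    rw [norm_mul, Complex.norm_real, Real.norm_of_nonneg (hf_nonneg l hl)]
  have hfirst := hnorm (n + 1) _ hfn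
  have hlow := hnorm n₀ _ (hf_nonneg n₀ (Finset.left_mem_Icc.mpr hn))
  rw [sub_one_mul_sum_Icc_eq g (fun l => (f l : ℂ)) c hn]
  calc _ ≤ ‖g (n + 1) * (f n : ℂ)‖ + ‖g n₀ * (f n₀ : ℂ)‖
        + ‖∑ l ∈ Finset.Ico n₀ n, g (l + 1) * ((f l : ℂ) - f (l + 1))‖
        + ‖∑ l ∈ Finset.Icc n₀ n, (g (l + 1) - c * g l) * (f l : ℂ)‖ :=
      norm_sub_le_of_le (norm_add_le_of_le (norm_sub_le _ _) le_rfl) le_rfl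
    _ ≤ _ := by linarith

theorem sum_Icc_inv_sub_sq_le {b n₀ : ℕ} (n : ℕ) (h : b < n₀) :
    ∑ l ∈ Finset.Icc n₀ n, (((l : ℝ) - b)⁻¹) ^ 2 ≤ 2 * ((n₀ : ℝ) - b)⁻¹ := by
  have hcast : ∀ l ∈ Finset.Icc n₀ n, ((l : ℝ) - b)⁻¹ ^ 2 = (((l - b : ℕ) : ℝ) ^ 2)⁻¹ :=
    fun l hl => by
      rw [Nat.cast_sub (h.le.trans (Finset.mem_Icc.mp hl).1), inv_pow]
  have hinj : Set.InjOn (· - b) (Finset.Icc n₀ n : Set ℕ) := fun l hl m hm hlm => by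
    simp only [Finset.coe_Icc, Set.mem_Icc] at hl hm
    simp only at hlm
    omega
  have hsub : (Finset.Icc n₀ n).image (· - b) ⊆ Finset.Ioo (n₀ - b - 1) (n + 1) := by
    intro i hi
    simp only [Finset.mem_image, Finset.mem_Icc, Finset.mem_Ioo] at hi ⊢
    omega
  calc _ = ∑ i ∈ (Finset.Icc n₀ n).image (· - b), (((i : ℕ) : ℝ) ^ 2)⁻¹ := by
        rw [Finset.sum_image hinj]; exact Finset.sum_congr rfl hcast
    _ ≤ ∑ i ∈ Finset.Ioo (n₀ - b - 1) (n + 1), (((i : ℕ) : ℝ) ^ 2)⁻¹ :=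
        Finset.sum_le_sum_of_subset_of_nonneg hsub fun _ _ _ => by positivity
    _ ≤ 2 / ((n₀ - b - 1 : ℕ) + 1) := sum_Ioo_inv_sq_le _ _
    _ = 2 * ((n₀ : ℝ) - b)⁻¹ := by
        rw [Nat.cast_sub (by omega), Nat.cast_sub h.le, div_eq_mul_inv]; push_cast; ring_nf

theorem norm_sub_one_mul_sum_Icc_div_sub_le (g : ℕ → ℂ) (c : ℂ) {b n₀ n : ℕ} {M : ℝ}
    (hM : 0 ≤ M) (hb : b < n₀) (hn : n₀ ≤ n) (hg : ∀ l, ‖g l‖ ≤ 1)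
    (hstep : ∀ l ∈ Finset.Icc n₀ n, ‖g (l + 1) - c * g l‖ ≤ M * ((l : ℝ) - b)⁻¹) :
    ‖(c - 1) * ∑ l ∈ Finset.Icc n₀ n, g l / ↑((l : ℝ) - b)‖ ≤ 2 * (1 + M) * ((n₀ : ℝ) - b)⁻¹ := by
  have hpos : ∀ l ∈ Set.Icc n₀ n, 0 < (l : ℝ) - b := fun l hl => by
    have : (b : ℝ) < l := by exact_mod_cast hb.trans_le hl.1
    linarith
  have hanti : AntitoneOn (fun l : ℕ => ((l : ℝ) - b)⁻¹) (Set.Icc n₀ n) :=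
    fun l hl m _ hlm => inv_anti₀ (hpos l hl) (by simpa using hlm)
  have hsum : ∑ l ∈ Finset.Icc n₀ n, g l / ↑((l : ℝ) - b)
      = ∑ l ∈ Finset.Icc n₀ n, g l * ↑(((l : ℝ) - b)⁻¹) := by
    simp only [div_eq_mul_inv, Complex.ofReal_inv]
  have herr : ∑ l ∈ Finset.Icc n₀ n, ‖g (l + 1) - c * g l‖ * ((l : ℝ) - b)⁻¹
      ≤ M * ∑ l ∈ Finset.Icc n₀ n, (((l : ℝ) - b)⁻¹) ^ 2 := by
    rw [Finset.mul_sum]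
    refine Finset.sum_le_sum fun l hl => ?_
    have := (inv_pos.mpr (hpos l (Finset.mem_Icc.mp hl))).le
    nlinarith [hstep l hl]
  rw [hsum]
  calc _ ≤ 2 * ((n₀ : ℝ) - b)⁻¹
        + ∑ l ∈ Finset.Icc n₀ n, ‖g (l + 1) - c * g l‖ * ((l : ℝ) - b)⁻¹ :=
      norm_sub_one_mul_sum_Icc_le g c _ hn hg hanti (inv_pos.mpr (hpos n ⟨hn, le_rfl⟩)).le
    _ ≤ 2 * (1 + M) * ((n₀ : ℝ) - b)⁻¹ := by
      nlinarith [sum_Icc_inv_sub_sq_le n hb]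

theorem ofReal_mul_exp_div_conj {r : ℝ} (hr : r ≠ 0) (x : ℝ) :
    (r * Complex.exp (x * I)) / conj (r * Complex.exp (x * I)) = Complex.exp (↑(2 * x) * I) := by
  rw [map_mul, Complex.conj_ofReal, ← Complex.exp_conj, map_mul, Complex.conj_ofReal,
    Complex.conj_I, mul_div_mul_left _ _ (Complex.ofReal_ne_zero.mpr hr), ← Complex.exp_sub]
  push_cast; ring_nf

theorem norm_exp_two_pi_I_mul (x : ℝ) : ‖Complex.exp (2 * π * I * x)‖ = 1 := by
  rw [show 2 * π * I * x = ↑(2 * π * x) * I by push_cast; ring, Complex.norm_exp_ofReal_mul_I]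

theorem norm_exp_two_pi_I_mul_sub_one (k : ℝ) :
    ‖Complex.exp (2 * π * I * k) - 1‖ = 2 * |Real.sin (π * k)| := by
  rw [show 2 * π * I * k = I * ↑(2 * π * k) by push_cast; ring,
    Complex.norm_exp_I_mul_ofReal_sub_one, norm_mul, Real.norm_two, Real.norm_eq_abs]
  ring_nf

def pruferAmplitude (k : ℝ) (u : ℕ → ℝ) (n : ℕ) : ℂ :=
  u n - Complex.exp (↑(-(π * k)) * I) * u (n - 1)

section PruferAmplitude

variable {k : ℝ} {u : ℕ → ℝ} {n : ℕ}

theorem pruferAmplitude_eq {R θ : ℕ → ℝ} (hk : Real.sin (π * k) ≠ 0)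
    (h : PruferRel k u R θ) (hn : 1 ≤ n) :
    pruferAmplitude k u n
      = ↑(Real.sin (π * k) * R n) * Complex.exp (↑(π * θ n - π * k) * I) := by
  obtain ⟨-, hsin, hcos⟩ := h n hn
  rw [div_eq_iff hk] at hcos
  apply Complex.ext <;>
    simp only [pruferAmplitude, Complex.sub_re, Complex.sub_im, Complex.mul_re, Complex.mul_im,
      Complex.ofReal_re, Complex.ofReal_im, Complex.exp_ofReal_mul_I_re,
      Complex.exp_ofReal_mul_I_im, Real.cos_neg, Real.sin_neg]
  · linear_combination hcos
  · linear_combination (Real.sin (π * k)) * hsin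

theorem abs_sin_mul_le_norm_pruferAmplitude :
    |Real.sin (π * k) * u n| ≤ ‖pruferAmplitude k u n‖ := by
  have him : (Complex.exp (↑(π * k) * I) * pruferAmplitude k u n).im
      = Real.sin (π * k) * u n := by
    rw [pruferAmplitude, mul_sub, ← mul_assoc, ← Complex.exp_add, ← add_mul, ← Complex.ofReal_add,
      add_neg_cancel, Complex.ofReal_zero, zero_mul, Complex.exp_zero, one_mul]
    simp only [Complex.sub_im, Complex.mul_im, Complex.ofReal_re, Complex.ofReal_im,
      Complex.exp_ofReal_mul_I_re, Complex.exp_ofReal_mul_I_im]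
    ring
  calc _ = |(Complex.exp (↑(π * k) * I) * pruferAmplitude k u n).im| := by rw [him]
    _ ≤ ‖Complex.exp (↑(π * k) * I) * pruferAmplitude k u n‖ := Complex.abs_im_le_norm _
    _ = ‖pruferAmplitude k u n‖ := by rw [norm_mul, Complex.norm_exp_ofReal_mul_I, one_mul]

theorem pruferAmplitude_succ {V : ℕ → ℝ} (hu : EigenEq V (2 * Real.cos (π * k)) u)
    (hn : 1 ≤ n) :
    pruferAmplitude k u (n + 1) = Complex.exp (↑(π * k) * I)
      * (pruferAmplitude k u n - Complex.exp (↑(-(π * k)) * I) * ↑(V n * u n)) := by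
  have hcos : ((2 * Real.cos (π * k) : ℝ) : ℂ)
      = Complex.exp (↑(π * k) * I) + Complex.exp (↑(-(π * k)) * I) := by
    rw [Complex.ofReal_mul, Complex.ofReal_cos, Complex.cos, Complex.ofReal_neg, neg_mul]
    push_cast; ring
  have hinv : Complex.exp (↑(π * k) * I) * Complex.exp (↑(-(π * k)) * I) = 1 := by
    rw [← Complex.exp_add, ← add_mul, ← Complex.ofReal_add, add_neg_cancel, Complex.ofReal_zero,
      zero_mul, Complex.exp_zero]
  have heq : (u (n + 1) : ℂ) + u (n - 1) + V n * u n = ((2 * Real.cos (π * k) : ℝ) : ℂ) * u n := by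
    exact_mod_cast hu n hn
  rw [pruferAmplitude, pruferAmplitude, Nat.add_sub_cancel, Complex.ofReal_mul (V n)]
  linear_combination heq + (u n : ℂ) * hcos + (u (n - 1) + V n * u n : ℂ) * hinv

theorem exp_two_pi_I_mul_eq {R θ : ℕ → ℝ} (hk : Real.sin (π * k) ≠ 0)
    (h : PruferRel k u R θ) (hn : 1 ≤ n) :
    Complex.exp (2 * π * I * θ n)
      = Complex.exp (2 * π * I * k) * (pruferAmplitude k u n / conj (pruferAmplitude k u n)) := by
  rw [pruferAmplitude_eq hk h hn, ofReal_mul_exp_div_conj (mul_ne_zero hk (h n hn).1.ne'),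
    ← Complex.exp_add]
  push_cast; ring_nf

theorem pruferAmplitude_ne_zero {R θ : ℕ → ℝ} (hk : Real.sin (π * k) ≠ 0)
    (h : PruferRel k u R θ) (hn : 1 ≤ n) : pruferAmplitude k u n ≠ 0 := by
  rw [pruferAmplitude_eq hk h hn]
  exact mul_ne_zero (Complex.ofReal_ne_zero.mpr (mul_ne_zero hk (h n hn).1.ne'))
    (Complex.exp_ne_zero _)

theorem norm_exp_two_pi_I_succ_sub_le {V R θ : ℕ → ℝ} (hs : 0 < Real.sin (π * k))
    (hu : EigenEq V (2 * Real.cos (π * k)) u) (h : PruferRel k u R θ) (hn : 1 ≤ n)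
    (hV : |V n| ≤ Real.sin (π * k) / 2) :
    ‖Complex.exp (2 * π * I * θ (n + 1))
        - Complex.exp (2 * π * I * k) * Complex.exp (2 * π * I * θ n)‖
      ≤ 4 * |V n| / Real.sin (π * k) := by
  set w := pruferAmplitude k u n
  set t : ℂ := -(Complex.exp (↑(-(π * k)) * I) * ↑(V n * u n))
  have hw : w ≠ 0 := pruferAmplitude_ne_zero hs.ne' h hn
  have hwpos : 0 < ‖w‖ := norm_pos_iff.mpr hw
  have ht : Real.sin (π * k) * ‖t‖ ≤ |V n| * ‖w‖ := by
    have := abs_sin_mul_le_norm_pruferAmplitude (k := k) (u := u) (n := n)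
    rw [norm_neg, norm_mul, Complex.norm_exp_ofReal_mul_I, one_mul, Complex.norm_real,
      Real.norm_eq_abs, abs_mul]
    rw [abs_mul, abs_of_pos hs] at this
    rw [mul_left_comm]
    exact mul_le_mul_of_nonneg_left this (abs_nonneg _)
  have hsucc : pruferAmplitude k u (n + 1) / conj (pruferAmplitude k u (n + 1))
      = Complex.exp (2 * π * I * k) * ((w + t) / conj (w + t)) := by
    rw [pruferAmplitude_succ hu hn, ← sub_eq_add_neg, map_mul, mul_div_mul_comm]
    congr 1
    simpa [mul_comm, mul_left_comm, mul_assoc] using ofReal_mul_exp_div_conj one_ne_zero (π * k)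
  rw [exp_two_pi_I_mul_eq hs.ne' h (by omega), exp_two_pi_I_mul_eq hs.ne' h hn, hsucc, ← mul_sub,
    ← mul_sub, norm_mul, norm_mul, norm_exp_two_pi_I_mul, one_mul, one_mul]
  calc _ ≤ 4 * ‖t‖ / ‖w‖ := norm_div_conj_add_sub_div_conj_le t hw (by nlinarith)
    _ ≤ 4 * |V n| / Real.sin (π * k) := by
      rw [div_le_div_iff₀ hwpos hs]; nlinarith

end PruferAmplitude

theorem oscillatory_sum_exp_general (E k : ℝ)
    (hk : k ∈ Set.Ioo (0 : ℝ) 1) (hEk : E = 2 * Real.cos (Real.pi * k))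
    (b : ℕ) (K : ℝ) (hK : 0 < K) :
    ∃ C : ℝ, 0 < C ∧ ∀ V u R θ : ℕ → ℝ,
      (∀ n : ℕ, b < n → |V n| ≤ K / ((n : ℝ) - (b : ℝ))) →
      (∀ n : ℕ, b < n → |V n / Real.sin (Real.pi * k)| < 1 / 2) →
      u ≠ 0 → EigenEq V E u → PruferRel k u R θ → BranchCond k θ →
      ∀ n₀ n : ℕ, b < n₀ → n₀ < n →
        ‖(∑ l ∈ Finset.Icc n₀ n,
            Complex.exp (2 * (Real.pi : ℂ) * Complex.I * ((θ l : ℝ) : ℂ))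
              / ((((l : ℝ) - (b : ℝ)) : ℝ) : ℂ))‖
          ≤ C / ((n₀ : ℝ) - (b : ℝ)) := by
  subst hEk
  have hs : 0 < Real.sin (π * k) :=
    Real.sin_pos_of_pos_of_lt_pi (mul_pos Real.pi_pos hk.1)
      (mul_lt_of_lt_one_right Real.pi_pos hk.2)
  refine ⟨(1 + 4 * K / Real.sin (π * k)) / Real.sin (π * k), by positivity, ?_⟩
  intro V u R θ hVK hVs _ hu hP _ n₀ n hb hn
  have hstep : ∀ l ∈ Finset.Icc n₀ n,
      ‖Complex.exp (2 * π * I * θ (l + 1))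
          - Complex.exp (2 * π * I * k) * Complex.exp (2 * π * I * θ l)‖
        ≤ 4 * K / Real.sin (π * k) * ((l : ℝ) - b)⁻¹ := fun l hl => by
    have hbl : b < l := hb.trans_le (Finset.mem_Icc.mp hl).1
    have hV := hVs l hbl
    rw [abs_div, abs_of_pos hs, div_lt_iff₀ hs] at hV
    calc _ ≤ 4 * |V l| / Real.sin (π * k) :=
          norm_exp_two_pi_I_succ_sub_le hs hu hP (by omega) (by linarith)
      _ ≤ 4 * (K / ((l : ℝ) - b)) / Real.sin (π * k) := by gcongr; exact hVK l hbl
      _ = _ := by ring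
  have hsum := norm_sub_one_mul_sum_Icc_div_sub_le (fun l => Complex.exp (2 * π * I * θ l))
    (Complex.exp (2 * π * I * k)) (by positivity) hb hn.le
    (fun l => (norm_exp_two_pi_I_mul (θ l)).le) hstep
  rw [norm_mul, norm_exp_two_pi_I_mul_sub_one, abs_of_pos hs] at hsum
  have hn₀ : 0 < (n₀ : ℝ) - b := sub_pos.mpr (by exact_mod_cast hb)
  rw [div_div, le_div_iff₀ (by positivity)]
  field_simp at hsum ⊢
  linarith

/-- Oscillatory sum estimate (complex exponential form): for a Prüfer angle `θ` of a
solution at energy `E = 2cos(πk)` with `|V(n)| ≤ K/(n-b)`, the weighted sums of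
`e^{2πiθ(l)}/(l-b)` are bounded by `C(E,K)/(n₀-b)`. -/
theorem oscillatory_sum_exp (E k : ℝ) (hE : E ∈ Set.Ioo (-2 : ℝ) 2)
    (hk : k ∈ Set.Ioo (0 : ℝ) 1) (hEk : E = 2 * Real.cos (Real.pi * k))
    (b : ℕ) (K : ℝ) (hK : 0 < K) :
    ∃ C : ℝ, 0 < C ∧ ∀ V u R θ : ℕ → ℝ,
      (∀ n : ℕ, b < n → |V n| ≤ K / ((n : ℝ) - (b : ℝ))) →
      (∀ n : ℕ, b < n → |V n / Real.sin (Real.pi * k)| < 1 / 2) →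
      u ≠ 0 → EigenEq V E u → PruferRel k u R θ → BranchCond k θ →
      ∀ n₀ n : ℕ, b < n₀ → n₀ < n →
        ‖(∑ l ∈ Finset.Icc n₀ n,
            Complex.exp (2 * (Real.pi : ℂ) * Complex.I * ((θ l : ℝ) : ℂ))
              / ((((l : ℝ) - (b : ℝ)) : ℝ) : ℂ))‖
          ≤ C / ((n₀ : ℝ) - (b : ℝ)) :=
  oscillatory_sum_exp_general E k hk hEk b K hK
end
end
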